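/- The coefficient of x^n in J_P(x, 1) = Σ_{a ∈ PB} x^{ι(a)} is equal to 1, and the coefficient of y^n in J_P(1, y) = Σ_{a ∈ PB} y^{ε(a)} is equal to 1; equivalently, there is exactly one basis a ∈ PB with ι(a) = n and exactly one basis a ∈ PB with ε(a) = n. -/

import Mathlib

open Finset

variable {n : ℕ}

/-- The set of bases of the integer polymatroid with rank function `f` on ground set `Fin n`:
integer vectors `a` with `a i ≥ 0`, `∑_{i ∈ I} a i ≤ f I` for every `I`, and `∑ i, a i = f [n]`.
(The upper bound `a i ≤ f {i}` used for the ambient finite set is implied by the constraints.) -/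
noncomputable def PB (n : ℕ) (f : Finset (Fin n) → ℕ) : Finset (Fin n → ℤ) :=
  (Fintype.piFinset fun i : Fin n => Finset.Icc (0 : ℤ) (f {i})).filter fun a =>
    (∀ I : Finset (Fin n), ∑ j ∈ I, a j ≤ (f I : ℤ)) ∧ ∑ j, a j = (f Finset.univ : ℤ)

/-- A set `I` is tight for `a` if `∑_{i ∈ I} a i = f I`. -/
def Tight (f : Finset (Fin n) → ℕ) (a : Fin n → ℤ) (I : Finset (Fin n)) : Prop :=
  ∑ i ∈ I, a i = (f I : ℤ)

/-- `i` is internally active with respect to `a`: `a - e_i + e_j ∉ PB` for every `j < i`. -/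
def IntAct (f : Finset (Fin n) → ℕ) (a : Fin n → ℤ) (i : Fin n) : Prop :=
  ∀ j : Fin n, j < i → a - Pi.single i 1 + Pi.single j 1 ∉ PB n f

/-- `i` is externally active with respect to `a`: `a + e_i - e_j ∉ PB` for every `j < i`. -/
def ExtAct (f : Finset (Fin n) → ℕ) (a : Fin n → ℤ) (i : Fin n) : Prop :=
  ∀ j : Fin n, j < i → a + Pi.single i 1 - Pi.single j 1 ∉ PB n f

open scoped Classical in
/-- `Int(a)`: the set of internally active indices. -/
noncomputable def IntSet (f : Finset (Fin n) → ℕ) (a : Fin n → ℤ) : Finset (Fin n) :=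
  Finset.univ.filter fun i => IntAct f a i

open scoped Classical in
/-- `Ext(a)`: the set of externally active indices. -/
noncomputable def ExtSet (f : Finset (Fin n) → ℕ) (a : Fin n → ℤ) : Finset (Fin n) :=
  Finset.univ.filter fun i => ExtAct f a i

/-- `ι(a) = |Int(a)|`, the internal activity. -/
noncomputable def iota (f : Finset (Fin n) → ℕ) (a : Fin n → ℤ) : ℕ := (IntSet f a).card

/-- `ε(a) = |Ext(a)|`, the external activity. -/
noncomputable def eps (f : Finset (Fin n) → ℕ) (a : Fin n → ℤ) : ℕ := (ExtSet f a).card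

/-!
The only basis at which every index is internally active is the greedy basis
`k ↦ f [0, k] - f [0, k)`. Submodularity puts it in `PB`, and it is internally active everywhere
because every prefix `[0, i)` is tight for it. Conversely, let every index of `a` be internally
active; then every prefix is tight, which pins `a` down to the greedy basis. Indeed, tight sets
are closed under union and intersection, and if no tight set containing `k` avoids a later
coordinate `i` with `a i ≥ 1`, then `a - e_i + e_k` is again a basis, contradicting activity of
`i`. So `[0, k)` together with the intersection of the separating tight sets is a tight set
exceeding `[0, k]` only by zero coordinates, and by monotonicity `[0, k]` is tight as well.
Reversing the order of `Fin n` exchanges external and internal activity.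
-/

def IsSubmodular (f : Finset (Fin n) → ℕ) : Prop :=
  ∀ I J, f (I ∪ J) + f (I ∩ J) ≤ f I + f J

section Tight

variable {f : Finset (Fin n) → ℕ} {a : Fin n → ℤ}

lemma mem_PB_iff :
    a ∈ PB n f ↔ (∀ i, 0 ≤ a i) ∧ (∀ I, ∑ j ∈ I, a j ≤ (f I : ℤ)) ∧ ∑ j, a j = (f univ : ℤ) := by
  simp only [PB, mem_filter, Fintype.mem_piFinset, mem_Icc, forall_and]
  refine ⟨fun h => ⟨h.1.1, h.2⟩, fun h => ⟨⟨h.1, fun i => ?_⟩, h.2⟩⟩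
  simpa using h.2.1 {i}

lemma Tight.union_inter (hsub : IsSubmodular f) (hub : ∀ I, ∑ j ∈ I, a j ≤ (f I : ℤ))
    {I J : Finset (Fin n)} (hI : Tight f a I) (hJ : Tight f a J) :
    Tight f a (I ∪ J) ∧ Tight f a (I ∩ J) := by
  have hsum : ∑ j ∈ I ∪ J, a j + ∑ j ∈ I ∩ J, a j = ∑ j ∈ I, a j + ∑ j ∈ J, a j :=
    sum_union_inter
  have hf : (f (I ∪ J) : ℤ) + f (I ∩ J) ≤ f I + f J := by exact_mod_cast hsub I J
  have hunion := hub (I ∪ J)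
  have hinter := hub (I ∩ J)
  unfold Tight at *
  constructor <;> linarith

lemma tight_sup (hf0 : f ∅ = 0) (hsub : IsSubmodular f) (hub : ∀ I, ∑ j ∈ I, a j ≤ (f I : ℤ))
    {ι : Type*} (s : Finset ι) (t : ι → Finset (Fin n)) (ht : ∀ i ∈ s, Tight f a (t i)) :
    Tight f a (s.sup t) :=
  sup_induction (by simp [Tight, hf0]) (fun _ hI _ hJ => (hI.union_inter hsub hub hJ).1) ht

lemma tight_inf (hsub : IsSubmodular f) (hub : ∀ I, ∑ j ∈ I, a j ≤ (f I : ℤ))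
    (htot : ∑ j, a j = (f univ : ℤ))
    {ι : Type*} (s : Finset ι) (t : ι → Finset (Fin n)) (ht : ∀ i ∈ s, Tight f a (t i)) :
    Tight f a (s.inf t) :=
  inf_induction htot (fun _ hI _ hJ => (hI.union_inter hsub hub hJ).2) ht

lemma Tight.of_subset (hmono : Monotone f) (hub : ∀ I, ∑ j ∈ I, a j ≤ (f I : ℤ))
    {S U : Finset (Fin n)} (hU : Tight f a U) (hSU : S ⊆ U) (hzero : ∀ i ∈ U, i ∉ S → a i = 0) :
    Tight f a S := by
  have hsum : ∑ j ∈ S, a j = ∑ j ∈ U, a j := sum_subset hSU hzero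
  have hfSU : (f S : ℤ) ≤ f U := by exact_mod_cast hmono hSU
  have hS := hub S
  unfold Tight at *
  linarith

lemma sum_sub_single_add_single (i k : Fin n) (I : Finset (Fin n)) :
    ∑ j ∈ I, (a - Pi.single i 1 + Pi.single k 1 : Fin n → ℤ) j
      = ∑ j ∈ I, a j - (if i ∈ I then 1 else 0) + (if k ∈ I then 1 else 0) := by
  simp only [Pi.add_apply, Pi.sub_apply, sum_add_distrib, sum_sub_distrib, Pi.single_apply,
    sum_ite_eq']

lemma exists_tight_of_exchange_notMem (ha : a ∈ PB n f) {i k : Fin n} (hik : i ≠ k)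
    (hai : 1 ≤ a i) (hex : a - Pi.single i 1 + Pi.single k 1 ∉ PB n f) :
    ∃ T, Tight f a T ∧ k ∈ T ∧ i ∉ T := by
  by_contra! hsep
  obtain ⟨h0, hub, htot⟩ := mem_PB_iff.1 ha
  refine hex (mem_PB_iff.2 ⟨fun j => ?_, fun I => ?_, ?_⟩)
  · have hj := h0 j
    rcases eq_or_ne j i with rfl | hji
    · simp [hik.symm]
      omega
    · simp only [Pi.add_apply, Pi.sub_apply, Pi.single_apply, hji, if_false]
      split_ifs <;> omega
  · have hI := hub I
    rw [sum_sub_single_add_single]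
    by_cases hiI : i ∈ I <;> by_cases hkI : k ∈ I <;> simp only [hiI, hkI, if_true, if_false]
    · linarith
    · linarith
    · linarith [lt_of_le_of_ne hI fun h => hiI (hsep I h hkI)]
    · linarith
  · rw [sum_sub_single_add_single]
    simp [htot]

end Tight

noncomputable def greedy (f : Finset (Fin n) → ℕ) (k : Fin n) : ℤ :=
  (f (Iic k) : ℤ) - f (Iio k)

section Greedy

variable {f : Finset (Fin n) → ℕ}

lemma sum_greedy_le (hsub : IsSubmodular f) (I : Finset (Fin n)) :
    ∑ j ∈ I, greedy f j ≤ (f I : ℤ) := by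
  induction I using induction_on_max with
  | empty => simp
  | insert k s hlt ih =>
    have hunion : insert k s ∪ Iio k = Iic k := by
      rw [← Iio_insert, insert_union, union_eq_right.2 fun x hx => mem_Iio.2 (hlt x hx)]
    have hinter : insert k s ∩ Iio k = s := by
      rw [insert_inter_of_notMem notMem_Iio_self, inter_eq_left.2 fun x hx => mem_Iio.2 (hlt x hx)]
    have hk : (f (Iic k) : ℤ) + f s ≤ f (insert k s) + f (Iio k) := by
      exact_mod_cast hunion ▸ hinter ▸ hsub (insert k s) (Iio k)
    rw [sum_insert fun hks => lt_irrefl k (hlt k hks), greedy]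
    linarith

lemma sum_greedy_of_isLowerSet (hf0 : f ∅ = 0) {I : Finset (Fin n)}
    (hI : IsLowerSet (I : Set (Fin n))) : ∑ j ∈ I, greedy f j = (f I : ℤ) := by
  induction I using induction_on_max with
  | empty => simp [hf0]
  | insert k s hlt ih =>
    have hs : s = Iio k := by
      ext x
      refine ⟨fun hx => mem_Iio.2 (hlt x hx), fun hx => ?_⟩
      have := hI (mem_Iio.1 hx).le (mem_insert_self k s)
      exact (mem_insert.1 this).resolve_left (mem_Iio.1 hx).ne
    subst hs
    rw [sum_insert notMem_Iio_self, ih (by simpa using isLowerSet_Iio k), Iio_insert, greedy]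
    ring

lemma greedy_mem_PB (hf0 : f ∅ = 0) (hmono : Monotone f) (hsub : IsSubmodular f) :
    greedy f ∈ PB n f := by
  refine mem_PB_iff.2 ⟨fun k => ?_, sum_greedy_le hsub, ?_⟩
  · have : f (Iio k) ≤ f (Iic k) := hmono Iio_subset_Iic_self
    simp only [greedy, sub_nonneg]
    exact_mod_cast this
  · exact sum_greedy_of_isLowerSet hf0 (by simpa using isLowerSet_univ)

lemma intAct_greedy (hf0 : f ∅ = 0) (i : Fin n) : IntAct f (greedy f) i := by
  intro j hji hmem
  have hub := (mem_PB_iff.1 hmem).2.1 (Iio i)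
  rw [sum_sub_single_add_single, sum_greedy_of_isLowerSet hf0 (by simpa using isLowerSet_Iio i),
    if_neg notMem_Iio_self, if_pos (mem_Iio.2 hji)] at hub
  linarith

end Greedy

section Uniqueness

variable {f : Finset (Fin n) → ℕ} {a : Fin n → ℤ}

lemma tight_Iio (hf0 : f ∅ = 0) (hsub : IsSubmodular f) (hub : ∀ I, ∑ j ∈ I, a j ≤ (f I : ℤ))
    {k : Fin n}
    (h : ∀ j < k, Tight f a (Iic j)) : Tight f a (Iio k) := by
  have hIio : (Iio k).sup Iic = Iio k := by
    ext x
    simp only [mem_sup, mem_Iio, mem_Iic]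
    exact ⟨fun ⟨j, hj, hxj⟩ => hxj.trans_lt hj, fun hx => ⟨x, hx, le_rfl⟩⟩
  exact hIio ▸ tight_sup hf0 hsub hub _ _ fun j hj => h j (mem_Iio.1 hj)

lemma tight_Iic_of_forall_intAct (hf0 : f ∅ = 0) (hmono : Monotone f) (hsub : IsSubmodular f)
    (ha : a ∈ PB n f) (hact : ∀ i, IntAct f a i) (k : Fin n) : Tight f a (Iic k) := by
  obtain ⟨h0, hub, htot⟩ := mem_PB_iff.1 ha
  induction k using WellFoundedLT.induction with
  | _ k ih =>
    have hsep : ∀ i, ∃ T, Tight f a T ∧ k ∈ T ∧ (k < i → 1 ≤ a i → i ∉ T) := by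
      intro i
      by_cases hi : k < i ∧ 1 ≤ a i
      · obtain ⟨T, hT, hkT, hiT⟩ :=
          exists_tight_of_exchange_notMem ha hi.1.ne' hi.2 (hact i k hi.1)
        exact ⟨T, hT, hkT, fun _ _ => hiT⟩
      · exact ⟨univ, htot, mem_univ k, fun h1 h2 => absurd ⟨h1, h2⟩ hi⟩
    choose T hT hkT hiT using hsep
    -- Intersecting the separating sets leaves only zero coordinates above `k`.
    have hU : Tight f a (Iio k ∪ univ.inf T) :=
      (Tight.union_inter hsub hub (tight_Iio hf0 hsub hub ih)
        (tight_inf hsub hub htot univ T fun i _ => hT i)).1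
    refine hU.of_subset hmono hub ?_ fun i hiU hik => ?_
    · rw [← Iio_insert, insert_subset_iff]
      exact ⟨mem_union_right _ (mem_inf.2 fun i _ => hkT i), subset_union_left⟩
    · have hki : k < i := lt_of_not_ge fun h => hik (mem_Iic.2 h)
      have hiT' : i ∈ univ.inf T := (mem_union.1 hiU).resolve_left fun h => (mem_Iio.1 h).not_gt hki
      by_contra hai
      exact hiT i hki (by have := h0 i; omega) (mem_inf.1 hiT' i (mem_univ i))

lemma eq_greedy_of_forall_intAct (hf0 : f ∅ = 0) (hmono : Monotone f) (hsub : IsSubmodular f)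
    (ha : a ∈ PB n f) (hact : ∀ i, IntAct f a i) : a = greedy f := by
  funext k
  have hIic := tight_Iic_of_forall_intAct hf0 hmono hsub ha hact k
  have hIio : Tight f a (Iio k) := tight_Iio hf0 hsub (mem_PB_iff.1 ha).2.1
    fun j _ => tight_Iic_of_forall_intAct hf0 hmono hsub ha hact j
  unfold Tight at hIic hIio
  rw [← Iio_insert, sum_insert notMem_Iio_self, hIio, Iio_insert] at hIic
  rw [greedy]
  linarith

lemma iota_eq_iff : iota f a = n ↔ ∀ i, IntAct f a i := by
  classical
  have := card_filter_eq_iff (s := univ) (p := IntAct f a)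
  rw [card_univ, Fintype.card_fin] at this
  simpa [iota, IntSet] using this

lemma filter_iota_eq_singleton (hf0 : f ∅ = 0) (hmono : Monotone f) (hsub : IsSubmodular f) :
    (PB n f).filter (fun a => iota f a = n) = {greedy f} := by
  ext a
  simp only [mem_filter, mem_singleton, iota_eq_iff]
  refine ⟨fun ⟨ha, hact⟩ => eq_greedy_of_forall_intAct hf0 hmono hsub ha hact, ?_⟩
  rintro rfl
  exact ⟨greedy_mem_PB hf0 hmono hsub, intAct_greedy hf0⟩

end Uniqueness

section Reverse

variable {f : Finset (Fin n) → ℕ} {a : Fin n → ℤ}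

lemma comp_perm_mem_PB_iff (σ : Equiv.Perm (Fin n)) :
    a ∘ σ ∈ PB n (f ∘ σ.finsetCongr) ↔ a ∈ PB n f := by
  rw [mem_PB_iff, mem_PB_iff]
  refine and_congr (σ.forall_congr_right (q := fun i => 0 ≤ a i)) (and_congr ?_ ?_)
  · refine Iff.trans ?_ (σ.finsetCongr.forall_congr_right (q := fun I => ∑ j ∈ I, a j ≤ (f I : ℤ)))
    simp [sum_map]
  · simp [Equiv.sum_comp σ a]

lemma sub_single_add_single_comp_rev (x y : Fin n) :
    (a + Pi.single x 1 - Pi.single y 1) ∘ Fin.revPerm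
      = a ∘ Fin.revPerm - Pi.single y.rev 1 + Pi.single x.rev 1 := by
  ext z
  simp only [Function.comp_apply, Fin.revPerm_apply, Pi.add_apply, Pi.sub_apply, Pi.single_apply,
    Fin.rev_eq_iff]
  ring

lemma forall_extAct_iff :
    (∀ i, ExtAct f a i) ↔ ∀ i, IntAct (f ∘ Fin.revPerm.finsetCongr) (a ∘ Fin.revPerm) i := by
  constructor
  · intro h i j hji hmem
    refine h j.rev i.rev (Fin.rev_lt_rev.2 hji) ((comp_perm_mem_PB_iff Fin.revPerm).1 ?_)
    rwa [sub_single_add_single_comp_rev, Fin.rev_rev, Fin.rev_rev]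
  · intro h x y hyx hmem
    refine h y.rev x.rev (Fin.rev_lt_rev.2 hyx) ?_
    rw [← sub_single_add_single_comp_rev]
    exact (comp_perm_mem_PB_iff Fin.revPerm).2 hmem

lemma eps_eq_iff : eps f a = n ↔ ∀ i, ExtAct f a i := by
  classical
  have := card_filter_eq_iff (s := univ) (p := ExtAct f a)
  rw [card_univ, Fintype.card_fin] at this
  simpa [eps, ExtSet] using this

lemma filter_eps_eq_singleton (hf0 : f ∅ = 0) (hmono : Monotone f) (hsub : IsSubmodular f) :
    (PB n f).filter (fun a => eps f a = n)
      = {greedy (f ∘ Fin.revPerm.finsetCongr) ∘ Fin.revPerm} := by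
  have hrev := filter_iota_eq_singleton (f := f ∘ Fin.revPerm.finsetCongr) (by simp [hf0])
    (hmono.comp fun _ _ => map_subset_map.2)
    fun I J => by
      simp only [Function.comp_apply, Equiv.finsetCongr_apply, map_union, map_inter]
      exact hsub _ _
  ext a
  have ha := Finset.ext_iff.1 hrev (a ∘ Fin.revPerm)
  simp only [mem_filter, mem_singleton, iota_eq_iff, comp_perm_mem_PB_iff] at ha
  simp only [mem_filter, mem_singleton, eps_eq_iff, forall_extAct_iff, ha]
  rw [← Fin.revPerm_symm, Equiv.eq_comp_symm, Fin.revPerm_symm]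

end Reverse

open scoped Classical in
theorem coeff_top_general
    (n : ℕ) (f : Finset (Fin n) → ℕ)
    (hf0 : f ∅ = 0)
    (hmono : ∀ I J : Finset (Fin n), I ⊆ J → f I ≤ f J)
    (hsub : ∀ I J : Finset (Fin n), f (I ∪ J) + f (I ∩ J) ≤ f I + f J) :
    ((PB n f).filter fun a => iota f a = n).card = 1 ∧
    ((PB n f).filter fun a => eps f a = n).card = 1 := by
  have hmono' : Monotone f := fun I J => hmono I J
  rw [filter_iota_eq_singleton hf0 hmono' hsub, filter_eps_eq_singleton hf0 hmono' hsub]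
  exact ⟨card_singleton _, card_singleton _⟩

open scoped Classical in
/-- There is exactly one basis of internal activity `n` and exactly one basis of
external activity `n`; equivalently the coefficients of `x^n` in `J_P(x,1)` and of
`y^n` in `J_P(1,y)` are both `1`. -/
theorem coeff_top
    (n : ℕ) (hn : 0 < n) (f : Finset (Fin n) → ℕ)
    (hf0 : f ∅ = 0)
    (hmono : ∀ I J : Finset (Fin n), I ⊆ J → f I ≤ f J)
    (hsub : ∀ I J : Finset (Fin n), f (I ∪ J) + f (I ∩ J) ≤ f I + f J) :
    ((PB n f).filter fun a => iota f a = n).card = 1 ∧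
    ((PB n f).filter fun a => eps f a = n).card = 1 :=
  coeff_top_general n f hf0 hmono hsub
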